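/- arXiv:2604.07055 — 3 statements merged into one kernel-verified Lean document; each statement's English description precedes it below -/
import Mathlib

section
/- The weak-learning margins of the two gadget matrices and their block product are all equal to 1/5: γ(L_A) = γ(L_B) = γ(L_A ⊞ L_B) = 1/5. Moreover, for any distribution W on the rows of M₀ = L_A ⊞ L_B with marginals (a,b), one has max_{1≤j≤8} (Wᵀ M₀)_j = max( max_{1≤j≤4} (aᵀ L_A)_j , max_{1≤j≤4} (bᵀ L_B)_j ). -/
open Finset Filter

/-- A probability vector: nonnegative entries summing to 1. -/
def IsProbVec {ι : Type*} [Fintype ι] (D : ι → ℝ) : Prop :=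
  (∀ i, 0 ≤ D i) ∧ ∑ i, D i = 1

/-- All entries of the matrix are `+1` or `-1`. -/
def IsSignMatrix {ι : Type*} {N : ℕ} (M : ι → Fin N → ℝ) : Prop :=
  ∀ i j, M i j = 1 ∨ M i j = -1

/-- The edge of column `j` at distribution `D`. -/
def edge {ι : Type*} [Fintype ι] {N : ℕ} (M : ι → Fin N → ℝ) (D : ι → ℝ)
    (j : Fin N) : ℝ :=
  ∑ i, D i * M i j
/-- The weak-learning margin `γ(M)`. -/
noncomputable def margin {ι : Type*} [Fintype ι] {N : ℕ} [NeZero N]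
    (M : ι → Fin N → ℝ) : ℝ :=
  sInf {x : ℝ | ∃ D : ι → ℝ, IsProbVec D ∧
    x = Finset.univ.sup' Finset.univ_nonempty (edge M D)}

/-- The 4×4 gadget matrix `L_A`. -/
def LA : Fin 4 → Fin 4 → ℝ :=
  ![![1, 1, -1, -1], ![-1, 1, 1, 1], ![1, -1, -1, 1], ![1, -1, 1, -1]]

/-- The 5×4 gadget matrix `L_B`. -/
def LB : Fin 5 → Fin 4 → ℝ :=
  ![![1, 1, -1, -1], ![-1, 1, 1, 1], ![1, -1, -1, 1], ![1, -1, 1, -1],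
    ![1, -1, 1, 1]]

/-- The 20×8 block product `M₀ = L_A ⊞ L_B`: rows are indexed by pairs
`(r, s) ∈ Fin 4 × Fin 5`; columns `0,1,2,3` are the A-columns `A₁,…,A₄`
(copied from row `r` of `L_A`) and columns `4,5,6,7` are the B-columns
`B₁,…,B₄` (copied from row `s` of `L_B`). -/
def M₀ : Fin 4 × Fin 5 → Fin 8 → ℝ := fun p j =>
  if h : (j : ℕ) < 4 then LA p.1 ⟨(j : ℕ), h⟩
  else LB p.2 ⟨(j : ℕ) - 4, by have := j.isLt; omega⟩

/-! The row distribution `(1,2,1,1)/5` (extended by `0` for the fifth row of `L_B`) has all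
edges `1/5`, while the column mixture `(2,1,1,1)/5` gives every row of either gadget payoff at
least `1/5`; by weak LP duality `γ(L_A) = γ(L_B) = 1/5`. Each column of `L_A ⊞ L_B` has, at `W`,
the `L_A`- or `L_B`-edge of the corresponding marginal of `W`, and product distributions realise
any pair of marginals, so `γ(L_A ⊞ L_B) = max (γ(L_A), γ(L_B))`. -/

def maxEdge {ι : Type*} [Fintype ι] {N : ℕ} [NeZero N] (M : ι → Fin N → ℝ) (D : ι → ℝ) : ℝ :=
  Finset.univ.sup' Finset.univ_nonempty (edge M D)

def maxEdgeValues {ι : Type*} [Fintype ι] {N : ℕ} [NeZero N] (M : ι → Fin N → ℝ) : Set ℝ :=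
  {x | ∃ D : ι → ℝ, IsProbVec D ∧ x = maxEdge M D}

/-- The block product `A ⊞ B`. -/
def blockProduct {ι κ : Type*} {n m : ℕ} (A : ι → Fin n → ℝ) (B : κ → Fin m → ℝ) :
    ι × κ → Fin (n + m) → ℝ :=
  fun p => Fin.append (A p.1) (B p.2)

section Margin

variable {ι : Type*} [Fintype ι] {N : ℕ} [NeZero N] {M : ι → Fin N → ℝ}

theorem margin_eq_of_isLeast {c : ℝ} (h : IsLeast (maxEdgeValues M) c) : margin M = c :=
  h.csInf_eq

theorem edge_le_maxEdge (D : ι → ℝ) (j : Fin N) : edge M D j ≤ maxEdge M D :=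
  Finset.le_sup' _ (Finset.mem_univ j)

/-- Weak LP duality. -/
theorem le_maxEdge_of_columnMixture {y : Fin N → ℝ} (hy : IsProbVec y) {c : ℝ}
    (hrow : ∀ i, c ≤ ∑ j, y j * M i j) {D : ι → ℝ} (hD : IsProbVec D) :
    c ≤ maxEdge M D :=
  calc c = ∑ i, D i * c := by rw [← Finset.sum_mul, hD.2, one_mul]
    _ ≤ ∑ i, D i * ∑ j, y j * M i j :=
        Finset.sum_le_sum fun i _ => mul_le_mul_of_nonneg_left (hrow i) (hD.1 i)
    _ = ∑ j, y j * edge M D j := by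
        simp only [edge, Finset.mul_sum]
        rw [Finset.sum_comm]
        exact Finset.sum_congr rfl fun j _ => Finset.sum_congr rfl fun i _ => by ring
    _ ≤ ∑ j, y j * maxEdge M D :=
        Finset.sum_le_sum fun j _ => mul_le_mul_of_nonneg_left (edge_le_maxEdge D j) (hy.1 j)
    _ = maxEdge M D := by rw [← Finset.sum_mul, hy.2, one_mul]

theorem isLeast_maxEdgeValues_of_certificate {D : ι → ℝ} (hD : IsProbVec D)
    {y : Fin N → ℝ} (hy : IsProbVec y) {c : ℝ} (hcol : ∀ j, edge M D j ≤ c)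
    (hrow : ∀ i, c ≤ ∑ j, y j * M i j) : IsLeast (maxEdgeValues M) c := by
  have hlower : ∀ D', IsProbVec D' → c ≤ maxEdge M D' := fun _ =>
    le_maxEdge_of_columnMixture hy hrow
  refine ⟨⟨D, hD, ?_⟩, ?_⟩
  · exact le_antisymm (hlower D hD) (Finset.sup'_le _ _ fun j _ => hcol j)
  · rintro x ⟨D', hD', rfl⟩
    exact hlower D' hD'

end Margin

section BlockProduct

variable {ι κ : Type*} [Fintype ι] [Fintype κ] {n m : ℕ}

theorem IsProbVec.marginal_fst {W : ι × κ → ℝ} (hW : IsProbVec W) :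
    IsProbVec fun r => ∑ s, W (r, s) :=
  ⟨fun r => Finset.sum_nonneg fun s _ => hW.1 (r, s), by rw [← Fintype.sum_prod_type, hW.2]⟩

theorem IsProbVec.marginal_snd {W : ι × κ → ℝ} (hW : IsProbVec W) :
    IsProbVec fun s => ∑ r, W (r, s) :=
  ⟨fun s => Finset.sum_nonneg fun r _ => hW.1 (r, s), by rw [← Fintype.sum_prod_type_right, hW.2]⟩

theorem IsProbVec.prod {a : ι → ℝ} {b : κ → ℝ} (ha : IsProbVec a) (hb : IsProbVec b) :
    IsProbVec fun p : ι × κ => a p.1 * b p.2 :=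
  ⟨fun p => mul_nonneg (ha.1 p.1) (hb.1 p.2), by
    simp only [Fintype.sum_prod_type, ← Finset.sum_mul_sum, ha.2, hb.2, one_mul]⟩

theorem edge_blockProduct_castAdd (A : ι → Fin n → ℝ) (B : κ → Fin m → ℝ) (W : ι × κ → ℝ)
    (j : Fin n) :
    edge (blockProduct A B) W (Fin.castAdd m j) = edge A (fun r => ∑ s, W (r, s)) j := by
  simp only [edge, blockProduct, Fin.append_left, Fintype.sum_prod_type, Finset.sum_mul]

theorem edge_blockProduct_natAdd (A : ι → Fin n → ℝ) (B : κ → Fin m → ℝ) (W : ι × κ → ℝ)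
    (j : Fin m) :
    edge (blockProduct A B) W (Fin.natAdd n j) = edge B (fun s => ∑ r, W (r, s)) j := by
  simp only [edge, blockProduct, Fin.append_right, Fintype.sum_prod_type_right, Finset.sum_mul]

theorem maxEdge_blockProduct [NeZero n] [NeZero m] (A : ι → Fin n → ℝ) (B : κ → Fin m → ℝ)
    (W : ι × κ → ℝ) :
    maxEdge (blockProduct A B) W =
      max (maxEdge A fun r => ∑ s, W (r, s)) (maxEdge B fun s => ∑ r, W (r, s)) := by
  apply le_antisymm
  · refine Finset.sup'_le _ _ fun j _ => j.addCases (fun j => ?_) (fun j => ?_)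
    · rw [edge_blockProduct_castAdd]
      exact (edge_le_maxEdge _ j).trans (le_max_left _ _)
    · rw [edge_blockProduct_natAdd]
      exact (edge_le_maxEdge _ j).trans (le_max_right _ _)
  · refine max_le (Finset.sup'_le _ _ fun j _ => ?_) (Finset.sup'_le _ _ fun j _ => ?_)
    · rw [← edge_blockProduct_castAdd A B]
      exact edge_le_maxEdge _ _
    · rw [← edge_blockProduct_natAdd A B]
      exact edge_le_maxEdge _ _

theorem isLeast_maxEdgeValues_blockProduct [NeZero n] [NeZero m] {A : ι → Fin n → ℝ}
    {B : κ → Fin m → ℝ} {c d : ℝ} (hA : IsLeast (maxEdgeValues A) c)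
    (hB : IsLeast (maxEdgeValues B) d) :
    IsLeast (maxEdgeValues (blockProduct A B)) (max c d) := by
  obtain ⟨⟨a, ha, rfl⟩, hA⟩ := hA
  obtain ⟨⟨b, hb, rfl⟩, hB⟩ := hB
  have hfst : (fun r => ∑ s, a r * b s) = a :=
    funext fun r => by rw [← Finset.mul_sum, hb.2, mul_one]
  have hsnd : (fun s => ∑ r, a r * b s) = b :=
    funext fun s => by rw [← Finset.sum_mul, ha.2, one_mul]
  refine ⟨⟨_, ha.prod hb, ?_⟩, ?_⟩
  · rw [maxEdge_blockProduct, hfst, hsnd]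
  · rintro x ⟨W, hW, rfl⟩
    rw [maxEdge_blockProduct]
    exact max_le_max (hA ⟨_, hW.marginal_fst, rfl⟩) (hB ⟨_, hW.marginal_snd, rfl⟩)

end BlockProduct

theorem M₀_eq_blockProduct : M₀ = blockProduct LA LB := by
  funext p j
  fin_cases j <;> rfl

noncomputable def dualMixture : Fin 4 → ℝ := ![2/5, 1/5, 1/5, 1/5]

theorem isProbVec_dualMixture : IsProbVec dualMixture := by
  refine ⟨fun j => ?_, ?_⟩
  · fin_cases j <;> norm_num [dualMixture]
  · simp [dualMixture, Fin.sum_univ_four]; norm_num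

theorem isLeast_maxEdgeValues_LA : IsLeast (maxEdgeValues LA) (1 / 5) := by
  refine isLeast_maxEdgeValues_of_certificate (D := ![1/5, 2/5, 1/5, 1/5])
    ?_ isProbVec_dualMixture (fun j => ?_) (fun i => ?_)
  · refine ⟨fun i => ?_, ?_⟩
    · fin_cases i <;> norm_num
    · simp [Fin.sum_univ_four]; norm_num
  · fin_cases j <;> simp [edge, LA, Fin.sum_univ_four] <;> norm_num
  · fin_cases i <;> simp [dualMixture, LA, Fin.sum_univ_four] <;> norm_num

theorem isLeast_maxEdgeValues_LB : IsLeast (maxEdgeValues LB) (1 / 5) := by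
  refine isLeast_maxEdgeValues_of_certificate (D := ![1/5, 2/5, 1/5, 1/5, 0])
    ?_ isProbVec_dualMixture (fun j => ?_) (fun i => ?_)
  · refine ⟨fun i => ?_, ?_⟩
    · fin_cases i <;> norm_num
    · simp [Fin.sum_univ_five]; norm_num
  · fin_cases j <;> simp [edge, LB, Fin.sum_univ_five] <;> norm_num
  · fin_cases i <;> simp [dualMixture, LB, Fin.sum_univ_four] <;> norm_num

/-- Margins. The weak-learning margins of the two gadgets
and of their block product are all `1/5`:
`γ(L_A) = γ(L_B) = γ(L_A ⊞ L_B) = 1/5`. Moreover, for any distribution `W` on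
the rows of `M₀ = L_A ⊞ L_B` with marginals `(a, b)`, the maximal edge over
the 8 columns of `M₀` equals the maximum of the maximal `L_A`-edge of `a` and
the maximal `L_B`-edge of `b`. -/
theorem margins_eq_one_fifth :
    margin LA = 1 / 5 ∧ margin LB = 1 / 5 ∧ margin M₀ = 1 / 5 ∧
    ∀ W : Fin 4 × Fin 5 → ℝ, IsProbVec W →
      Finset.univ.sup' Finset.univ_nonempty (edge M₀ W) =
        max
          (Finset.univ.sup' Finset.univ_nonempty
            (edge LA fun r => ∑ s : Fin 5, W (r, s)))
          (Finset.univ.sup' Finset.univ_nonempty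
            (edge LB fun s => ∑ r : Fin 4, W (r, s))) := by
  have hM₀ : IsLeast (maxEdgeValues M₀) (1 / 5) := by
    simpa only [M₀_eq_blockProduct, max_self] using
      isLeast_maxEdgeValues_blockProduct isLeast_maxEdgeValues_LA isLeast_maxEdgeValues_LB
  refine ⟨margin_eq_of_isLeast isLeast_maxEdgeValues_LA,
    margin_eq_of_isLeast isLeast_maxEdgeValues_LB, margin_eq_of_isLeast hM₀, fun W _ => ?_⟩
  rw [M₀_eq_blockProduct]
  exact maxEdge_blockProduct LA LB W
end

section
/- Let S be a real n×n matrix with S² = I, let J₀ be a real n×n matrix, set J₁ = S J₀ S and R = J₁ J₀. Suppose μ ≠ 0 is an eigenvalue of R with eigenvector v₀ ≠ 0 whose eigenspace {v : R v = μ v} is one-dimensional, and set v₁ = S v₀. Then there exists a scalar c with c² = μ such that J₀ v₀ = c v₁ and J₁ v₁ = c v₀. Moreover, the reverse product R′ = J₀ J₁ satisfies R′ = S R S, R′ v₁ = μ v₁, and the μ-eigenspace of R′ is one-dimensional. -/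
/-- Half-step factorization. Let `S` be a real `n×n`
matrix with `S² = I`, let `J₀` be a real `n×n` matrix, `J₁ = S J₀ S`, and
`R = J₁ J₀`. Suppose `μ ≠ 0` is an eigenvalue of `R` with eigenvector
`v₀ ≠ 0` whose eigenspace is one-dimensional, and set `v₁ = S v₀`. Then there
is a scalar `c` with `c² = μ`, `J₀ v₀ = c v₁` and `J₁ v₁ = c v₀`. Moreover
the reverse product `R′ = J₀ J₁` satisfies `R′ = S R S`, `R′ v₁ = μ v₁`, and
the `μ`-eigenspace of `R′` is one-dimensional (spanned by `v₁ ≠ 0`). -/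
theorem half_step_factorization {n : ℕ}
    (S J₀ J₁ R : Matrix (Fin n) (Fin n) ℝ)
    (hS : S * S = 1) (hJ₁ : J₁ = S * J₀ * S) (hR : R = J₁ * J₀)
    (μ : ℝ) (hμ : μ ≠ 0) (v₀ : Fin n → ℝ) (hv₀ : v₀ ≠ 0)
    (heig : R.mulVec v₀ = μ • v₀)
    (hdim : ∀ v : Fin n → ℝ, R.mulVec v = μ • v → ∃ t : ℝ, v = t • v₀) :
    (∃ c : ℝ, c ^ 2 = μ ∧ J₀.mulVec v₀ = c • S.mulVec v₀ ∧
      J₁.mulVec (S.mulVec v₀) = c • v₀) ∧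
    J₀ * J₁ = S * R * S ∧
    (J₀ * J₁).mulVec (S.mulVec v₀) = μ • S.mulVec v₀ ∧
    S.mulVec v₀ ≠ 0 ∧
    (∀ v : Fin n → ℝ, (J₀ * J₁).mulVec v = μ • v →
      ∃ t : ℝ, v = t • S.mulVec v₀) := by
  subst hJ₁ hR
  have hSS : ∀ v : Fin n → ℝ, S.mulVec (S.mulVec v) = v := by
    intro v
    rw [Matrix.mulVec_mulVec, hS, Matrix.one_mulVec]
  have hSne : S.mulVec v₀ ≠ 0 := by
    intro h
    apply hv₀
    rw [← hSS v₀, h, Matrix.mulVec_zero]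
  -- the matrix R commutes with S*J₀
  have hcomm : (S * J₀ * S * J₀) * (S * J₀) = (S * J₀) * (S * J₀ * S * J₀) := by
    simp only [mul_assoc]
  have h1 : (S * J₀ * S * J₀).mulVec ((S * J₀).mulVec v₀)
      = μ • ((S * J₀).mulVec v₀) := by
    rw [Matrix.mulVec_mulVec, hcomm, ← Matrix.mulVec_mulVec, heig,
      Matrix.mulVec_smul]
  obtain ⟨c, hc⟩ := hdim _ h1
  have hJv : J₀.mulVec v₀ = c • S.mulVec v₀ := by
    have h2 := congrArg S.mulVec hc
    rw [Matrix.mulVec_mulVec, ← mul_assoc, hS, one_mul,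
      Matrix.mulVec_smul] at h2
    exact h2
  have hc2 : c ^ 2 = μ := by
    have h3 : (S * J₀ * S * J₀).mulVec v₀
        = (S * J₀).mulVec ((S * J₀).mulVec v₀) := by
      rw [Matrix.mulVec_mulVec, ← mul_assoc]
    rw [heig, hc, Matrix.mulVec_smul, hc, smul_smul] at h3
    have h4 : (μ - c * c) • v₀ = 0 := by
      rw [sub_smul, h3, sub_self]
    rcases smul_eq_zero.mp h4 with h | h
    · nlinarith
    · exact absurd h hv₀
  have hJ1v : (S * J₀ * S).mulVec (S.mulVec v₀) = c • v₀ := by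
    rw [Matrix.mulVec_mulVec, mul_assoc, hS, mul_one, ← Matrix.mulVec_mulVec,
      hJv, Matrix.mulVec_smul, hSS]
  have hRrev : J₀ * (S * J₀ * S) = S * (S * J₀ * S * J₀) * S := by
    have h5 : S * (S * J₀ * S * J₀) * S = (S * S) * (J₀ * (S * J₀ * S)) := by
      simp only [mul_assoc]
    rw [h5, hS, one_mul]
  have hRv1 : (J₀ * (S * J₀ * S)).mulVec (S.mulVec v₀) = μ • S.mulVec v₀ := by
    rw [hRrev, Matrix.mulVec_mulVec, mul_assoc, hS, mul_one,
      ← Matrix.mulVec_mulVec, heig, Matrix.mulVec_smul]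
  refine ⟨⟨c, hc2, hJv, hJ1v⟩, hRrev, hRv1, hSne, ?_⟩
  intro v hv
  have hvS : (S * J₀ * S * J₀).mulVec (S.mulVec v) = μ • S.mulVec v := by
    have : S * J₀ * S * J₀ * S = S * (J₀ * (S * J₀ * S)) := by
      simp only [mul_assoc]
    rw [Matrix.mulVec_mulVec, this, ← Matrix.mulVec_mulVec, hv,
      Matrix.mulVec_smul]
  obtain ⟨t, ht⟩ := hdim _ hvS
  refine ⟨t, ?_⟩
  have := congrArg S.mulVec ht
  rw [hSS, Matrix.mulVec_smul] at this
  exact this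
end

section
/- Let m_A = 0.307394561088771942, M_A = 0.307396653842409774, m_B = 0.451388989838190632, M_B = 0.451676307610047724 (exact rational constants). Let (r_n) be a sequence of positive reals such that for every n: if r_n ≥ 1 then m_A r_n ≤ r_{n+1} ≤ M_A r_n, and if r_n < 1 then r_n/M_B ≤ r_{n+1} ≤ r_n/m_B. Then: (0) there exists n₀ such that r_n ∈ [m_A, 1/m_B] for all n ≥ n₀; (i) for all n ≥ n₀, if r_n ≥ 1 then r_{n+1} < 1 (every A-run has length exactly 1); (ii) for all n ≥ n₀, if r_n < 1 and r_{n+1} < 1 then r_{n+2} ≥ 1 (every B-run has length at most 2). Consequently every block of three consecutive indices n ≥ n₀ contains at least one index with r_n ≥ 1 and at least one with r_n < 1. -/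
/-- The certified contraction constant `m_A`. -/
noncomputable def mA : ℝ := 0.307394561088771942
/-- The certified contraction constant `M_A`. -/
noncomputable def MA : ℝ := 0.307396653842409774
/-- The certified contraction constant `m_B`. -/
noncomputable def mB : ℝ := 0.451388989838190632
/-- The certified contraction constant `M_B`. -/
noncomputable def MB : ℝ := 0.451676307610047724
lemma mA_pos : (0:ℝ) < mA := by norm_num [mA]
lemma mA_lt_one : mA < 1 := by norm_num [mA]
lemma mB_pos : (0:ℝ) < mB := by norm_num [mB]
lemma MB_pos : (0:ℝ) < MB := by norm_num [MB]
lemma MB_lt_one : MB < 1 := by norm_num [MB]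
lemma MB_le_half : MB ≤ 1/2 := by norm_num [MB]
lemma MA_pos : (0:ℝ) < MA := by norm_num [MA]
lemma MA_lt_one : MA < 1 := by norm_num [MA]
lemma MA_lt_mB : MA < mB := by norm_num [MA, mB]
lemma MB_sq_lt_mA : MB^2 < mA := by norm_num [MB, mA]
lemma mA_lt_mB : mA < mB := by norm_num [mA, mB]
lemma one_le_inv_mB : (1:ℝ) ≤ 1/mB := by norm_num [mB]

section
variable (r : ℕ → ℝ) (hpos : ∀ n, 0 < r n)
    (hA : ∀ n, 1 ≤ r n → mA * r n ≤ r (n + 1) ∧ r (n + 1) ≤ MA * r n)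
    (hB : ∀ n, r n < 1 → r n / MB ≤ r (n + 1) ∧ r (n + 1) ≤ r n / mB)

include hpos hA hB

lemma step_inv (n : ℕ) (h : r n ∈ Set.Icc mA (1/mB)) :
    r (n+1) ∈ Set.Icc mA (1/mB) := by
  obtain ⟨h1, h2⟩ := h
  have hmB := mB_pos
  have hMB := MB_pos
  by_cases hr : 1 ≤ r n
  · obtain ⟨l, u⟩ := hA n hr
    constructor
    · nlinarith [mA_pos]
    · have h3 : MA * r n ≤ MA * (1/mB) := by
        have := MA_pos; nlinarith
      have h4 : MA * (1/mB) ≤ 1/mB := by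
        have : (0:ℝ) < 1/mB := by positivity
        nlinarith [MA_lt_one]
      linarith
  · push_neg at hr
    obtain ⟨l, u⟩ := hB n hr
    constructor
    · have : r n ≤ r n / MB := by
        rw [le_div_iff₀ hMB]
        nlinarith [hpos n, MB_lt_one]
      linarith
    · have : r n / mB ≤ 1 / mB := (div_le_div_iff_of_pos_right hmB).mpr (le_of_lt hr)
      linarith

lemma entry : ∃ n, r n ∈ Set.Icc mA (1/mB) := by
  classical
  by_cases h0 : 1 ≤ r 0
  · -- eventually r n < 1
    have hlt : ∃ n, r n < 1 := by
      by_contra hc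
      push_neg at hc
      have hb : ∀ n, r n ≤ r 0 * MA ^ n := by
        intro n
        induction n with
        | zero => simp
        | succ k ih =>
          have h2 := (hA k (hc k)).2
          have hMApos := MA_pos
          calc r (k+1) ≤ MA * r k := h2
            _ ≤ MA * (r 0 * MA ^ k) := by nlinarith
            _ = r 0 * MA ^ (k+1) := by ring
      obtain ⟨n, hn⟩ := exists_pow_lt_of_lt_one (show (0:ℝ) < 1 / r 0 by positivity) MA_lt_one
      have h1 : r 0 * MA ^ n < r 0 * (1 / r 0) := by
        have := hpos 0; nlinarith
      rw [mul_one_div, div_self (by positivity)] at h1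
      exact absurd (hc n) (not_le.mpr (lt_of_le_of_lt (hb n) h1))
    set n := Nat.find hlt with hndef
    have hn : r n < 1 := Nat.find_spec hlt
    have hne : n ≠ 0 := by
      intro h; rw [h] at hn; linarith
    obtain ⟨m, hm⟩ := Nat.exists_eq_succ_of_ne_zero hne
    have hmlt : ¬ r m < 1 := Nat.find_min hlt (by omega)
    push_neg at hmlt
    have hl := (hA m hmlt).1
    refine ⟨n, ?_, ?_⟩
    · rw [hm]; nlinarith [mA_pos]
    · linarith [one_le_inv_mB]
  · push_neg at h0
    have hge : ∃ n, mA ≤ r n := by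
      by_contra hc
      push_neg at hc
      have hlt1 : ∀ n, r n < 1 := fun n => lt_trans (hc n) mA_lt_one
      have hb : ∀ n, r 0 * 2 ^ n ≤ r n := by
        intro n
        induction n with
        | zero => simp
        | succ k ih =>
          have h1 := (hB k (hlt1 k)).1
          have h2 : 2 * r k ≤ r k / MB := by
            rw [le_div_iff₀ MB_pos]
            nlinarith [hpos k, MB_le_half]
          calc r 0 * 2 ^ (k+1) = 2 * (r 0 * 2 ^ k) := by ring
            _ ≤ 2 * r k := by nlinarith
            _ ≤ r (k+1) := by linarith
      obtain ⟨n, hn⟩ := pow_unbounded_of_one_lt (mA / r 0) (show (1:ℝ) < 2 by norm_num)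
      have h1 : mA < r 0 * 2 ^ n := by
        rw [div_lt_iff₀ (hpos 0)] at hn
        linarith [hn]
      exact absurd (hc n) (not_lt.mpr (le_of_lt (lt_of_lt_of_le h1 (hb n))))
    set n := Nat.find hge with hndef
    have hn : mA ≤ r n := Nat.find_spec hge
    refine ⟨n, hn, ?_⟩
    rcases Nat.eq_zero_or_pos n with h | h
    · rw [h]; linarith [one_le_inv_mB]
    · obtain ⟨m, hm⟩ := Nat.exists_eq_succ_of_ne_zero (Nat.pos_iff_ne_zero.mp h)
      have hmlt : ¬ mA ≤ r m := Nat.find_min hge (by omega)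
      push_neg at hmlt
      have hu := (hB m (lt_trans hmlt mA_lt_one)).2
      have h2 : r m / mB < mA / mB := (div_lt_div_iff_of_pos_right mB_pos).mpr hmlt
      have h3 : mA / mB < 1 := by
        rw [div_lt_one mB_pos]; exact mA_lt_mB
      rw [hm]
      linarith [one_le_inv_mB]

end

/-- Burst-ratio dynamics and run-length bounds. Let
`(r_n)` be a sequence of positive reals such that if `r_n ≥ 1` then
`m_A r_n ≤ r_{n+1} ≤ M_A r_n`, and if `r_n < 1` then
`r_n/M_B ≤ r_{n+1} ≤ r_n/m_B`. Then: (0) eventually `r_n ∈ [m_A, 1/m_B]`;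
(i) eventually, if `r_n ≥ 1` then `r_{n+1} < 1` (A-runs have length exactly
1); (ii) eventually, if `r_n < 1` and `r_{n+1} < 1` then `r_{n+2} ≥ 1`
(B-runs have length at most 2). Consequently every block of three
consecutive (eventual) indices contains an index with `r_n ≥ 1` and one with
`r_n < 1`. -/
theorem burst_ratio_dynamics (r : ℕ → ℝ) (hpos : ∀ n, 0 < r n)
    (hA : ∀ n, 1 ≤ r n → mA * r n ≤ r (n + 1) ∧ r (n + 1) ≤ MA * r n)
    (hB : ∀ n, r n < 1 → r n / MB ≤ r (n + 1) ∧ r (n + 1) ≤ r n / mB) :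
    ∃ n₀ : ℕ, ∀ n ≥ n₀,
      r n ∈ Set.Icc mA (1 / mB) ∧
      (1 ≤ r n → r (n + 1) < 1) ∧
      (r n < 1 → r (n + 1) < 1 → 1 ≤ r (n + 2)) ∧
      (∃ k < 3, 1 ≤ r (n + k)) ∧
      (∃ k < 3, r (n + k) < 1) := by
  obtain ⟨N, hN⟩ := entry r hpos hA hB
  have hicc : ∀ n ≥ N, r n ∈ Set.Icc mA (1/mB) := by
    intro n hn
    induction n with
    | zero => simpa [Nat.le_zero.mp hn] using hN
    | succ k ih =>
      rcases Nat.lt_or_ge N (k+1) with h | h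
      · exact step_inv r hpos hA hB k (ih (by omega))
      · have : N = k + 1 := by omega
        rw [← this]; exact hN
  refine ⟨N, fun n hn => ?_⟩
  have hIcc := hicc n hn
  obtain ⟨hlo, hhi⟩ := hIcc
  -- (i)
  have hi : 1 ≤ r n → r (n + 1) < 1 := by
    intro h1
    have hu := (hA n h1).2
    have : MA * r n ≤ MA * (1/mB) := by nlinarith [MA_pos]
    have h2 : MA * (1/mB) < 1 := by
      rw [mul_one_div, div_lt_one mB_pos]; exact MA_lt_mB
    linarith
  -- (ii)
  have hii : r n < 1 → r (n + 1) < 1 → 1 ≤ r (n + 2) := by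
    intro h1 h2
    have hl1 := (hB n h1).1
    have hl2 := (hB (n+1) h2).1
    have e1 : r n ≤ r (n+1) * MB := by
      rw [div_le_iff₀ MB_pos] at hl1; linarith
    have e2 : r (n+1) ≤ r (n+2) * MB := by
      rw [div_le_iff₀ MB_pos] at hl2
      have : n + 1 + 1 = n + 2 := by ring
      rw [this] at hl2; linarith
    have e3 : mA ≤ r (n+2) * MB^2 := by nlinarith [MB_pos]
    by_contra hc
    push_neg at hc
    nlinarith [MB_sq_lt_mA, MB_pos, hpos (n+2)]
  refine ⟨⟨hlo, hhi⟩, hi, hii, ?_, ?_⟩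
  · by_cases h1 : 1 ≤ r n
    · exact ⟨0, by norm_num, by simpa using h1⟩
    · by_cases h2 : 1 ≤ r (n+1)
      · exact ⟨1, by norm_num, h2⟩
      · push_neg at h1 h2
        exact ⟨2, by norm_num, hii h1 h2⟩
  · by_cases h1 : 1 ≤ r n
    · exact ⟨1, by norm_num, hi h1⟩
    · push_neg at h1
      exact ⟨0, by norm_num, by simpa using h1⟩
end
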